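/- For the threshold graphon W(x,y)=1_{⟨x,y⟩≥τ} with X ~ F_ν, P(d_W(X) = 0) = F_Beta(τ^2), where F_Beta is the CDF of Beta(d/2, ν+1/2). -/

import Mathlib

/-! A point `x` has degree zero exactly when the cap `{y | τ ≤ ⟪x, y⟫}` misses the open
unit ball, i.e. when `‖x‖ ≤ τ`; otherwise the cap contains a nonempty open piece of the ball,
where the density of `F_ν` is positive. So the probability is `F_ν(closedBall 0 τ)`.
Integrating the radial density in polar coordinates and substituting `t = s²` turns the mass
of `closedBall 0 r` into `∫₀^{r²} t^{d/2-1} (1-t)^{ν-1/2} dt` up to a constant, and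
normalizing by the value at `r = 1`, the Beta integral, gives the regularized incomplete
Beta function. -/

open MeasureTheory Real
open scoped RealInnerProductSpace

/-- The probability measure `F_ν` on the unit ball of `ℝ^d` with density
proportional to `(1 - ‖x‖²)^(ν - 1/2)` with respect to Lebesgue measure. -/
noncomputable def Fnu (d : ℕ) (ν : ℝ) : Measure (EuclideanSpace ℝ (Fin d)) :=
  letI base : Measure (EuclideanSpace ℝ (Fin d)) :=
    (volume.restrict (Metric.closedBall 0 1)).withDensity
      (fun x => ENNReal.ofReal ((1 - ‖x‖ ^ 2) ^ (ν - 1 / 2)))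
  (base Set.univ)⁻¹ • base

/-- The degree function of the threshold graphon `W(x,y) = 1_{⟨x,y⟩ ≥ τ}`
on the unit ball, with latent measure `F_ν`. -/
noncomputable def degW (d : ℕ) (ν τ : ℝ) (x : EuclideanSpace ℝ (Fin d)) : ℝ :=
  (Fnu d ν {y | τ ≤ ⟪x, y⟫}).toReal

/-- The regularized incomplete Beta function
`I(x; a, b) = (1/B(a,b)) ∫_0^x t^(a-1) (1-t)^(b-1) dt`. -/
noncomputable def regIncBeta (x a b : ℝ) : ℝ :=
  (∫ t in (0 : ℝ)..x, t ^ (a - 1) * (1 - t) ^ (b - 1)) * Real.Gamma (a + b) /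
    (Real.Gamma a * Real.Gamma b)

open Metric Set ProbabilityTheory

theorem intervalIntegral_rpow_mul_one_sub_rpow {a b : ℝ} (ha : 0 < a) (hb : 0 < b) :
    ∫ t in (0 : ℝ)..1, t ^ (a - 1) * (1 - t) ^ (b - 1) = beta a b := by
  have hreal : Complex.betaIntegral a b =
      ↑(∫ t in (0 : ℝ)..1, t ^ (a - 1) * (1 - t) ^ (b - 1)) := by
    rw [Complex.betaIntegral, ← intervalIntegral.integral_ofReal]
    refine intervalIntegral.integral_congr fun t ht => ?_
    rw [uIcc_of_le zero_le_one] at ht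
    push_cast [Complex.ofReal_cpow ht.1, Complex.ofReal_cpow (sub_nonneg.2 ht.2)]
    rfl
  rw [beta_eq_betaIntegralReal a b ha hb, hreal, Complex.ofReal_re]

theorem regIncBeta_eq_div_beta (x a b : ℝ) :
    regIncBeta x a b = (∫ t in (0 : ℝ)..x, t ^ (a - 1) * (1 - t) ^ (b - 1)) / beta a b :=
  (div_div_eq_mul_div _ _ _).symm

theorem integral_pow_mul_comp_sq (n : ℕ) (g : ℝ → ℝ) {r : ℝ} (hr : 0 ≤ r) :
    ∫ s in (0 : ℝ)..r, s ^ n * g (s ^ 2) =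
      2⁻¹ * ∫ t in (0 : ℝ)..r ^ 2, t ^ (((n : ℝ) - 1) / 2) * g t := by
  have himage : (· ^ 2) '' Ioo 0 r = Ioo 0 (r ^ 2) := by
    ext t
    constructor
    · rintro ⟨s, ⟨hs0, hsr⟩, rfl⟩
      exact ⟨by positivity, pow_lt_pow_left₀ hsr hs0.le two_ne_zero⟩
    · rintro ⟨ht0, htr⟩
      refine ⟨√t, ⟨sqrt_pos.2 ht0, ?_⟩, sq_sqrt ht0.le⟩
      simpa [sqrt_sq hr] using sqrt_lt_sqrt ht0.le htr
  have hinj : InjOn (· ^ 2) (Ioo (0 : ℝ) r) := fun s hs s' hs' h =>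
    (pow_left_inj₀ hs.1.le hs'.1.le two_ne_zero).1 h
  have hchange := integral_image_eq_integral_abs_deriv_smul measurableSet_Ioo
    (fun s _ => (hasDerivAt_pow 2 s).hasDerivWithinAt) hinj
    (fun t => t ^ (((n : ℝ) - 1) / 2) * g t)
  rw [himage] at hchange
  rw [intervalIntegral.integral_of_le hr, intervalIntegral.integral_of_le (by positivity),
    integral_Ioc_eq_integral_Ioo, integral_Ioc_eq_integral_Ioo, hchange, ← integral_const_mul]
  refine setIntegral_congr_fun measurableSet_Ioo fun s hs => ?_
  have hs0 : 0 < s := hs.1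
  have hpow : (s ^ 2) ^ (((n : ℝ) - 1) / 2) * s = s ^ n := by
    rw [← rpow_natCast s 2, ← rpow_mul hs0.le, ← rpow_add_one hs0.ne', ← rpow_natCast]
    congr 1
    push_cast
    ring
  rw [Nat.cast_ofNat, pow_one, abs_of_pos (by positivity), smul_eq_mul, ← hpow]
  ring

section Radial

variable {E F : Type*} [NormedAddCommGroup E] [NormedSpace ℝ E] [MeasurableSpace E]
  [BorelSpace E] [FiniteDimensional ℝ E] [Nontrivial E]
  [NormedAddCommGroup F] [NormedSpace ℝ F]

theorem setIntegral_closedBall_fun_norm (μ : Measure E) [μ.IsAddHaarMeasure] (g : ℝ → F)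
    {r : ℝ} (hr : 0 ≤ r) :
    ∫ x in closedBall 0 r, g ‖x‖ ∂μ =
      Module.finrank ℝ E • μ.real (ball 0 1) •
        ∫ s in (0 : ℝ)..r, s ^ (Module.finrank ℝ E - 1) • g s := by
  have hball : closedBall (0 : E) r = (‖·‖) ⁻¹' Iic r := by
    ext x
    simp
  calc ∫ x in closedBall 0 r, g ‖x‖ ∂μ = ∫ x, (Iic r).indicator g ‖x‖ ∂μ := by
        rw [← integral_indicator measurableSet_closedBall, hball]
        rfl
    _ = Module.finrank ℝ E • μ.real (ball 0 1) •
          ∫ s in Ioi 0, (Iic r).indicator (fun s => s ^ (Module.finrank ℝ E - 1) • g s) s := by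
        simp only [indicator_smul_apply]
        exact integral_fun_norm_addHaar μ _
    _ = _ := by
        rw [setIntegral_indicator measurableSet_Iic, Ioi_inter_Iic,
          intervalIntegral.integral_of_le hr]

theorem setIntegral_closedBall_comp_norm_sq (μ : Measure E) [μ.IsAddHaarMeasure] (g : ℝ → ℝ)
    {r : ℝ} (hr : 0 ≤ r) :
    ∫ x in closedBall 0 r, g (‖x‖ ^ 2) ∂μ =
      (Module.finrank ℝ E / 2 : ℝ) * μ.real (ball 0 1) *
        ∫ t in (0 : ℝ)..r ^ 2, t ^ ((Module.finrank ℝ E : ℝ) / 2 - 1) * g t := by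
  have hexp :
      (((Module.finrank ℝ E - 1 : ℕ) : ℝ) - 1) / 2 = (Module.finrank ℝ E : ℝ) / 2 - 1 := by
    rw [Nat.cast_pred Module.finrank_pos]
    ring
  rw [setIntegral_closedBall_fun_norm μ (fun s => g (s ^ 2)) hr]
  simp only [nsmul_eq_mul, smul_eq_mul]
  rw [integral_pow_mul_comp_sq _ _ hr, hexp]
  ring

end Radial

section Cap

variable {E : Type*} [NormedAddCommGroup E] [InnerProductSpace ℝ E]

theorem setOf_le_inner_inter_ball_eq_empty {x : E} {τ : ℝ} (hτ : 0 < τ) (hx : ‖x‖ ≤ τ) :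
    {y | τ ≤ ⟪x, y⟫} ∩ ball 0 1 = ∅ := by
  refine eq_empty_iff_forall_notMem.2 fun y ⟨(hxy : τ ≤ ⟪x, y⟫), hy⟩ => ?_
  rw [mem_ball_zero_iff] at hy
  linarith [real_inner_le_norm x y, mul_le_mul_of_nonneg_right hx (norm_nonneg y),
    mul_lt_of_lt_one_right hτ hy]

theorem nonempty_setOf_lt_inner_inter_ball {x : E} {τ : ℝ} (hτ : 0 ≤ τ) (hx : τ < ‖x‖) :
    ({y | τ < ⟪x, y⟫} ∩ ball 0 1).Nonempty := by
  have hx0 : 0 < ‖x‖ := hτ.trans_lt hx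
  -- `⟪x, c • x⟫ = c ‖x‖²` is the midpoint of `τ` and `‖x‖`, and then `‖c • x‖ < 1`
  refine ⟨((τ + ‖x‖) / (2 * ‖x‖ ^ 2)) • x, ?_, ?_⟩
  · change τ < ⟪x, _⟫
    rw [real_inner_smul_right, real_inner_self_eq_norm_sq]
    field_simp
    linarith
  · rw [mem_ball_zero_iff, norm_smul, norm_of_nonneg (by positivity)]
    field_simp
    linarith

theorem measure_setOf_le_inner_inter_ball_eq_zero_iff [MeasurableSpace E]
    [OpensMeasurableSpace E] (μ : Measure E) [μ.IsOpenPosMeasure] (x : E) {τ : ℝ} (hτ : 0 < τ) :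
    μ ({y | τ ≤ ⟪x, y⟫} ∩ ball 0 1) = 0 ↔ ‖x‖ ≤ τ := by
  constructor
  · intro h
    by_contra! hx
    have hopen : IsOpen ({y | τ < ⟪x, y⟫} ∩ ball (0 : E) 1) :=
      (isOpen_lt continuous_const (continuous_const.inner continuous_id)).inter isOpen_ball
    exact hopen.measure_ne_zero μ (nonempty_setOf_lt_inner_inter_ball hτ.le hx)
      (measure_mono_null (inter_subset_inter_left _ fun y (hy : τ < ⟪x, y⟫) => hy.le) h)
  · intro hx
    rw [setOf_le_inner_inter_ball_eq_empty hτ hx, measure_empty]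

end Cap

section Fnu

variable {d : ℕ} {ν : ℝ}

noncomputable def unnormalizedFnu (d : ℕ) (ν : ℝ) : Measure (EuclideanSpace ℝ (Fin d)) :=
  (volume.restrict (closedBall 0 1)).withDensity
    (fun x => ENNReal.ofReal ((1 - ‖x‖ ^ 2) ^ (ν - 1 / 2)))

theorem Fnu_eq_smul (d : ℕ) (ν : ℝ) :
    Fnu d ν = (unnormalizedFnu d ν univ)⁻¹ • unnormalizedFnu d ν :=
  rfl

theorem unnormalizedFnu_univ :
    unnormalizedFnu d ν univ = unnormalizedFnu d ν (closedBall 0 1) := by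
  rw [unnormalizedFnu, withDensity_apply _ MeasurableSet.univ,
    withDensity_apply _ measurableSet_closedBall, Measure.restrict_univ,
    Measure.restrict_restrict measurableSet_closedBall, inter_self]

theorem unnormalizedFnu_real_closedBall (hd : 0 < d) {r : ℝ} (hr0 : 0 ≤ r) (hr1 : r ≤ 1) :
    (unnormalizedFnu d ν).real (closedBall 0 r) =
      (d / 2 : ℝ) * volume.real (ball (0 : EuclideanSpace ℝ (Fin d)) 1) *
        ∫ t in (0 : ℝ)..r ^ 2, t ^ ((d : ℝ) / 2 - 1) * (1 - t) ^ (ν - 1 / 2) := by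
  have : NeZero d := ⟨hd.ne'⟩
  rw [measureReal_def, unnormalizedFnu, withDensity_apply _ measurableSet_closedBall,
    Measure.restrict_restrict measurableSet_closedBall,
    inter_eq_left.2 (closedBall_subset_closedBall hr1), ← integral_eq_lintegral_of_nonneg_ae]
  · simpa only [finrank_euclideanSpace_fin] using
      setIntegral_closedBall_comp_norm_sq (volume : Measure (EuclideanSpace ℝ (Fin d)))
        (fun t => (1 - t) ^ (ν - 1 / 2)) hr0
  · filter_upwards [ae_restrict_mem measurableSet_closedBall] with x hx
    have hx1 : ‖x‖ ≤ 1 := (mem_closedBall_zero_iff.1 hx).trans hr1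
    exact rpow_nonneg (by nlinarith [norm_nonneg x]) _
  · exact Measurable.aestronglyMeasurable (by fun_prop)

theorem unnormalizedFnu_real_univ (hd : 0 < d) (hν : -1 / 2 < ν) :
    (unnormalizedFnu d ν).real univ =
      (d / 2 : ℝ) * volume.real (ball (0 : EuclideanSpace ℝ (Fin d)) 1) *
        beta ((d : ℝ) / 2) (ν + 1 / 2) := by
  rw [measureReal_def, unnormalizedFnu_univ, ← measureReal_def,
    unnormalizedFnu_real_closedBall hd zero_le_one le_rfl, one_pow,
    show ν - 1 / 2 = ν + 1 / 2 - 1 by ring,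
    intervalIntegral_rpow_mul_one_sub_rpow (by positivity) (by linarith)]

theorem unnormalizedFnu_real_univ_pos (hd : 0 < d) (hν : -1 / 2 < ν) :
    0 < (unnormalizedFnu d ν).real univ := by
  have : NeZero d := ⟨hd.ne'⟩
  rw [unnormalizedFnu_real_univ hd hν]
  have hball : 0 < volume.real (ball (0 : EuclideanSpace ℝ (Fin d)) 1) :=
    ENNReal.toReal_pos (measure_ball_pos volume 0 one_pos).ne' measure_ball_lt_top.ne
  have hbeta := beta_pos (by positivity : (0 : ℝ) < d / 2) (by linarith : 0 < ν + 1 / 2)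
  positivity

theorem isProbabilityMeasure_Fnu (hd : 0 < d) (hν : -1 / 2 < ν) :
    IsProbabilityMeasure (Fnu d ν) := by
  obtain ⟨hpos, hfin⟩ := ENNReal.toReal_pos_iff.1 (unnormalizedFnu_real_univ_pos hd hν)
  have : IsFiniteMeasure (unnormalizedFnu d ν) := ⟨hfin⟩
  have : NeZero (unnormalizedFnu d ν) := ⟨fun h => by simp [h] at hpos⟩
  rw [Fnu_eq_smul]
  infer_instance

theorem Fnu_real_closedBall (hd : 0 < d) (hν : -1 / 2 < ν) {r : ℝ} (hr0 : 0 ≤ r)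
    (hr1 : r ≤ 1) :
    (Fnu d ν).real (closedBall 0 r) =
      (∫ t in (0 : ℝ)..r ^ 2, t ^ ((d : ℝ) / 2 - 1) * (1 - t) ^ (ν - 1 / 2)) /
        beta ((d : ℝ) / 2) (ν + 1 / 2) := by
  have hc : (d / 2 : ℝ) * volume.real (ball (0 : EuclideanSpace ℝ (Fin d)) 1) ≠ 0 := by
    have := unnormalizedFnu_real_univ_pos hd hν
    rw [unnormalizedFnu_real_univ hd hν] at this
    exact left_ne_zero_of_mul this.ne'
  rw [Fnu_eq_smul, measureReal_ennreal_smul_apply, ENNReal.toReal_inv, ← measureReal_def,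
    unnormalizedFnu_real_univ hd hν, unnormalizedFnu_real_closedBall hd hr0 hr1, inv_mul_eq_div,
    mul_div_mul_left _ _ hc]

theorem unnormalizedFnu_eq_zero_iff (hd : 0 < d) {S : Set (EuclideanSpace ℝ (Fin d))} :
    unnormalizedFnu d ν S = 0 ↔ volume (S ∩ ball 0 1) = 0 := by
  have : NeZero d := ⟨hd.ne'⟩
  rw [unnormalizedFnu, withDensity_apply_eq_zero (by fun_prop),
    Measure.restrict_apply' measurableSet_closedBall]
  constructor
  · refine fun h => measure_mono_null (fun y hy => ?_) h
    have hy1 : ‖y‖ < 1 := mem_ball_zero_iff.1 hy.2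
    refine ⟨⟨?_, hy.1⟩, ball_subset_closedBall hy.2⟩
    exact (ENNReal.ofReal_pos.2 (rpow_pos_of_pos (by nlinarith [norm_nonneg y]) _)).ne'
  -- The density need not vanish on the unit sphere (e.g. `ν = 1/2`), but the sphere is null.
  · refine fun h => measure_mono_null (fun y ⟨⟨_, hyS⟩, hy⟩ => ?_)
      (measure_union_null h (Measure.addHaar_sphere volume 0 1))
    rcases (mem_closedBall_zero_iff.1 hy).lt_or_eq with hy1 | hy1
    · exact Or.inl ⟨hyS, mem_ball_zero_iff.2 hy1⟩
    · exact Or.inr (mem_sphere_zero_iff_norm.2 hy1)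

theorem Fnu_eq_zero_iff (hd : 0 < d) (hν : -1 / 2 < ν) {S : Set (EuclideanSpace ℝ (Fin d))} :
    Fnu d ν S = 0 ↔ volume (S ∩ ball 0 1) = 0 := by
  have hfin := (ENNReal.toReal_pos_iff.1 (unnormalizedFnu_real_univ_pos hd hν)).2.ne
  rw [Fnu_eq_smul, Measure.smul_apply, smul_eq_mul, mul_eq_zero, ENNReal.inv_eq_zero,
    or_iff_right hfin, unnormalizedFnu_eq_zero_iff hd]

theorem degW_eq_zero_iff (hd : 0 < d) (hν : -1 / 2 < ν) {τ : ℝ} (hτ : 0 < τ)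
    (x : EuclideanSpace ℝ (Fin d)) : degW d ν τ x = 0 ↔ ‖x‖ ≤ τ := by
  have := isProbabilityMeasure_Fnu hd hν
  rw [degW, ← measureReal_def, measureReal_eq_zero_iff, Fnu_eq_zero_iff hd hν,
    measure_setOf_le_inner_inter_ball_eq_zero_iff volume x hτ]

end Fnu

/-- For the threshold graphon on the unit ball with measure `F_ν` and `0 < τ < 1`,
with `X ~ F_ν`: `P(d_W(X) = 0) = F_Beta(τ²)`, where `F_Beta` is the CDF of
`Beta(d/2, ν + 1/2)`. -/
theorem prob_degW_eq_zero (d : ℕ) (hd : 0 < d) (ν τ : ℝ) (hν : -1 / 2 < ν)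
    (hτ0 : 0 < τ) (hτ1 : τ < 1) :
    (Fnu d ν {x | degW d ν τ x = 0}).toReal =
      regIncBeta (τ ^ 2) ((d : ℝ) / 2) (ν + 1 / 2) := by
  have hzero : {x | degW d ν τ x = 0} = closedBall 0 τ := by
    ext x
    rw [mem_closedBall_zero_iff, ← degW_eq_zero_iff hd hν hτ0]
    rfl
  rw [hzero, ← measureReal_def, Fnu_real_closedBall hd hν hτ0.le hτ1.le,
    regIncBeta_eq_div_beta, show ν + 1 / 2 - 1 = ν - 1 / 2 by ring]
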